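/- For all integers j ≥ 1 and k ≥ 1: ν_3(a(2j−1,k)) ≥ 2j−1+δ_{k,1}+⌊(9k−10)/2⌋ and ν_3(a(2j,k)) ≥ 2j+1+δ_{k,1}+⌊(9k−10)/2⌋, where δ_{k,1} equals 1 if k = 1 and 0 otherwise. Equivalently, 3 raised to each of these exponents (which are nonnegative for all k ≥ 1) divides a(2j−1,k) and a(2j,k) respectively. -/

import Mathlib

/-- The matrix `m(i,j)` of Hirschhorn: `m(i,j) = 0` whenever `i = 0` or `j = 0`
(corresponding to nonpositive indices), `m(1,1) = 9`, `m(2,1) = 6`, `m(3,1) = 1`,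
`m(i,1) = 0` for `i ≥ 4`, and for `j ≥ 2`,
`m(i,j) = 27·m(i-1,j-1) + 9·m(i-2,j-1) + m(i-3,j-1)`
(truncated subtraction correctly yields the prescribed value `0` at nonpositive
first arguments). -/
def mCoef : ℕ → ℕ → ℤ
  | _, 0 => 0
  | 0, _ => 0
  | 1, 1 => 9
  | 2, 1 => 6
  | 3, 1 => 1
  | _ + 4, 1 => 0
  | i, j + 2 => 27 * mCoef (i - 1) (j + 1) + 9 * mCoef (i - 2) (j + 1) + mCoef (i - 3) (j + 1)

/-- The matrix `a(j,k)`: `a(1,1) = 6`, `a(1,2) = 243`, `a(1,k) = 0` for `k ≥ 3`, and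
`a(j+1,k) = ∑_{i≥1} a(j,i)·m(4i,i+k)` if `j` is odd, while
`a(j+1,k) = ∑_{i≥1} a(j,i)·m(4i+2,i+k)` if `j` is even.  All terms of these sums with
`i > 3k + 3` vanish (since `m(i',j') = 0` unless `⌊(i'+2)/3⌋ ≤ j'`), so the sums may be
truncated at `i = 3k + 3`. -/
def aCoef : ℕ → ℕ → ℤ
  | 1, 1 => 6
  | 1, 2 => 243
  | j + 2, k =>
      if (j + 1) % 2 = 1 then
        ∑ i ∈ Finset.Icc 1 (3 * k + 3), aCoef (j + 1) i * mCoef (4 * i) (i + k)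
      else
        ∑ i ∈ Finset.Icc 1 (3 * k + 3), aCoef (j + 1) i * mCoef (4 * i + 2) (i + k)
  | _, _ => 0

/-!
The entries of `m` carry a large power of three: `3 ^ ⌊(9j - 3i - 1)/2⌋ ∣ m(i,j)`, because
raising `j` by one adds `9/2` to the exponent, which the weights `27 = 3³`, `9 = 3²`, `1`
pay for against the shifts `i - 1`, `i - 2`, `i - 3` of the first index.  Feeding this into
the two alternating recurrences for `a`, the row `a(2j-1, ·)` is converted into `a(2j, ·)`
with a gain of two factors of three (through `m(4i, i+k)`) and back into `a(2j+1, ·)` with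
no loss (through `m(4i+2, i+k)`), uniformly in the column index `k`.
-/

open Finset

theorem pow_dvd_mul_of_le_add {α : Type*} [CommMonoid α] {p a b : α} {v w n : ℕ}
    (ha : p ^ v ∣ a) (hb : p ^ w ∣ b) (h : n ≤ v + w) : p ^ n ∣ a * b :=
  (pow_dvd_pow p h).trans (pow_add p v w ▸ mul_dvd_mul ha hb)

@[simp]
theorem mCoef_zero_left (j : ℕ) : mCoef 0 j = 0 := by
  cases j <;> simp [mCoef]

theorem three_pow_dvd_mCoef : ∀ i j : ℕ, (3 : ℤ) ^ ((9 * j - (3 * i + 1)) / 2) ∣ mCoef i j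
  | i, 0 => by simp [mCoef]
  | 0, j => by simp
  | 1, 1 => by norm_num [mCoef]
  | 2, 1 => by norm_num [mCoef]
  | 3, 1 => by norm_num [mCoef]
  | i + 4, 1 => by simp [mCoef]
  | i + 1, j + 2 => by
    set n := (9 * (j + 2) - (3 * (i + 1) + 1)) / 2 with hn
    -- a shifted index that truncates to `0` contributes `mCoef 0 _ = 0`
    have shifted : ∀ d w : ℕ,
        (d ≤ i + 1 → n - w ≤ (9 * (j + 1) - (3 * (i + 1 - d) + 1)) / 2) →
        (3 : ℤ) ^ (n - w) ∣ mCoef (i + 1 - d) (j + 1) := by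
      intro d w h
      rcases Nat.lt_or_ge (i + 1) d with hlt | hle
      · simp [Nat.sub_eq_zero_of_le hlt.le]
      · exact (pow_dvd_pow 3 (h hle)).trans (three_pow_dvd_mCoef _ _)
    rw [mCoef.eq_7 _ _ (Nat.succ_ne_zero i)]
    refine dvd_add (dvd_add ?_ ?_) ?_
    · exact pow_dvd_mul_of_le_add (v := 3) (by norm_num) (shifted 1 3 (by omega)) (by omega)
    · exact pow_dvd_mul_of_le_add (v := 2) (by norm_num) (shifted 2 2 (by omega)) (by omega)
    · simpa using shifted 3 0 (by omega)

/-- `δ_{k,1} + ⌊(9k - 10)/2⌋` for `k ≥ 1`; at `k = 1` it is `1 + ⌊-1/2⌋ = 0`. -/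
def valOffset (k : ℕ) : ℕ := if k = 1 then 0 else (9 * k - 10) / 2

theorem valOffset_add_two_le {i k : ℕ} (hi : 1 ≤ i) (hk : 1 ≤ k) :
    valOffset k + 2 ≤ valOffset i + (9 * (i + k) - (3 * (4 * i) + 1)) / 2 := by
  unfold valOffset; split_ifs <;> omega

theorem valOffset_le (i k : ℕ) :
    valOffset k ≤ valOffset i + (9 * (i + k) - (3 * (4 * i + 2) + 1)) / 2 := by
  unfold valOffset; split_ifs <;> omega

theorem three_pow_dvd_sum_mul_mCoef {a : ℕ → ℤ} {n : ℕ → ℕ} {e m k : ℕ}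
    (ha : ∀ i, 1 ≤ i → (3 : ℤ) ^ (e + valOffset i) ∣ a i)
    (hm : ∀ i, 1 ≤ i → m ≤ e + valOffset i + (9 * (i + k) - (3 * n i + 1)) / 2) :
    (3 : ℤ) ^ m ∣ ∑ i ∈ Icc 1 (3 * k + 3), a i * mCoef (n i) (i + k) := by
  refine dvd_sum fun i hi => ?_
  have hi : 1 ≤ i := (mem_Icc.mp hi).1
  exact pow_dvd_mul_of_le_add (ha i hi) (three_pow_dvd_mCoef _ _) (hm i hi)

theorem aCoef_two_mul_add_two (j k : ℕ) :
    aCoef (2 * j + 2) k =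
      ∑ i ∈ Icc 1 (3 * k + 3), aCoef (2 * j + 1) i * mCoef (4 * i) (i + k) := by
  rw [aCoef, if_pos (by omega)]

theorem aCoef_two_mul_add_three (j k : ℕ) :
    aCoef (2 * j + 3) k =
      ∑ i ∈ Icc 1 (3 * k + 3), aCoef (2 * j + 2) i * mCoef (4 * i + 2) (i + k) := by
  rw [show 2 * j + 3 = 2 * j + 1 + 2 by omega, aCoef, if_neg (by omega)]

theorem three_pow_dvd_aCoef_one : ∀ k : ℕ, (3 : ℤ) ^ (1 + valOffset k) ∣ aCoef 1 k
  | 0 => by simp [aCoef]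
  | 1 => by norm_num [aCoef, valOffset]
  | 2 => by norm_num [aCoef, valOffset]
  | k + 3 => by simp [aCoef]

theorem three_pow_dvd_aCoef_two_mul_add_two {e j k : ℕ}
    (h : ∀ i, 1 ≤ i → (3 : ℤ) ^ (e + valOffset i) ∣ aCoef (2 * j + 1) i) (hk : 1 ≤ k) :
    (3 : ℤ) ^ (e + 2 + valOffset k) ∣ aCoef (2 * j + 2) k := by
  rw [aCoef_two_mul_add_two]
  exact three_pow_dvd_sum_mul_mCoef h fun i hi => by
    have := valOffset_add_two_le hi hk
    omega

theorem three_pow_dvd_aCoef_two_mul_add_three {e j k : ℕ}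
    (h : ∀ i, 1 ≤ i → (3 : ℤ) ^ (e + valOffset i) ∣ aCoef (2 * j + 2) i) :
    (3 : ℤ) ^ (e + valOffset k) ∣ aCoef (2 * j + 3) k := by
  rw [aCoef_two_mul_add_three]
  exact three_pow_dvd_sum_mul_mCoef h fun i _ => by
    have := valOffset_le i k
    omega

theorem three_pow_dvd_aCoef_two_mul_add_one :
    ∀ j k : ℕ, (3 : ℤ) ^ (2 * j + 1 + valOffset k) ∣ aCoef (2 * j + 1) k
  | 0, k => three_pow_dvd_aCoef_one k
  | j + 1, _ => three_pow_dvd_aCoef_two_mul_add_three fun _ hi =>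
      three_pow_dvd_aCoef_two_mul_add_two (fun i _ => three_pow_dvd_aCoef_two_mul_add_one j i) hi

/-- `ν₃(a(2j-1,k)) ≥ 2j - 1 + δ_{k,1} + ⌊(9k-10)/2⌋` and
`ν₃(a(2j,k)) ≥ 2j + 1 + δ_{k,1} + ⌊(9k-10)/2⌋` for `j, k ≥ 1`, stated as divisibility by
the corresponding powers of 3.  Here `δ_{k,1} + ⌊(9k-10)/2⌋` equals `0` when `k = 1`
(since `δ_{1,1} = 1` and `⌊-1/2⌋ = -1`) and equals `(9k-10)/2` in natural-number
division when `k ≥ 2`, so both total exponents are nonnegative. -/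
theorem aCoef_three_adic_bound (j k : ℕ) (hj : 1 ≤ j) (hk : 1 ≤ k) :
    (3 : ℤ) ^ (2 * j - 1 + (if k = 1 then 0 else (9 * k - 10) / 2)) ∣ aCoef (2 * j - 1) k ∧
    (3 : ℤ) ^ (2 * j + 1 + (if k = 1 then 0 else (9 * k - 10) / 2)) ∣ aCoef (2 * j) k := by
  obtain ⟨j, rfl⟩ := Nat.exists_eq_add_of_le' hj
  have odd := three_pow_dvd_aCoef_two_mul_add_one j
  rw [show 2 * (j + 1) - 1 = 2 * j + 1 by omega, show 2 * (j + 1) + 1 = 2 * j + 1 + 2 by ring,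
    show 2 * (j + 1) = 2 * j + 2 by ring]
  exact ⟨odd k, three_pow_dvd_aCoef_two_mul_add_two (fun i _ => odd i) hk⟩
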